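/- arXiv:1711.06600 — 3 statements merged into one kernel-verified Lean document; each statement's English description precedes it below -/
import Mathlib

section
/- Assume π₀ is f-invariant. Suppose that for every ε > 0 there exist T = T(ε) ∈ ℕ and a zero-delay coding and estimation policy over the finite alphabet M such that π₀({x₀ ∈ X : d(f^t(x₀), x̂_t(x₀)) ≤ ε for all t ≥ T}) = 1. Then log|M| ≥ h_top(f; supp π₀) (in particular the topological entropy of f on the support of π₀ is finite). -/
/-!
Fix `ε > 0` and a policy that tracks the orbit to within `ε / 4` from time `T` on, on a set `G`
of full measure. Bowen balls around points of the support have positive measure, so they meet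
`G`: an `(n, ε)`-separated subset of the support is shadowed by an `(n, ε / 2)`-separated subset
of `G` of the same size. Along its first `n` iterates a point of `G` is pinned down to within
`ε / 2` by its `n` channel symbols (times `≥ T`, where the estimate is `ε / 4`-accurate) together
with the cell of an `ε / 4`-net of `X^T` containing its first `T` iterates. Hence
`r_sep(n, ε; supp π₀) ≤ |M|^n · C(T, ε)`, whose exponential growth rate is at most `log |M|`.
-/

open MeasureTheory Filter Set

/-- A zero-delay coding and estimation policy over a channel alphabet `M`:
measurable coder maps `δ_t : X^{t+1} → M` and measurable estimator maps `γ_t : M^{t+1} → X`. -/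
structure Policy (X : Type*) [MeasurableSpace X] (M : Type*) [MeasurableSpace M] where
  coder : (t : ℕ) → (Fin (t + 1) → X) → M
  coder_meas : ∀ t, Measurable (coder t)
  est : (t : ℕ) → (Fin (t + 1) → M) → X
  est_meas : ∀ t, Measurable (est t)

/-- The channel symbol `q_t = δ_t(x₀, f(x₀), …, f^t(x₀))`. -/
def Policy.symb {X M : Type*} [MeasurableSpace X] [MeasurableSpace M]
    (pol : Policy X M) (f : X → X) (t : ℕ) (x₀ : X) : M :=
  pol.coder t fun i => f^[(i : ℕ)] x₀

/-- The estimator output `x̂_t(x₀) = γ_t(q₀, …, q_t)`. -/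
def Policy.out {X M : Type*} [MeasurableSpace X] [MeasurableSpace M]
    (pol : Policy X M) (f : X → X) (t : ℕ) (x₀ : X) : X :=
  pol.est t fun i => pol.symb f (i : ℕ) x₀
/-- The (topological) support of a Borel measure: points all of whose neighborhoods
have positive measure. -/
def msupp {X : Type*} [TopologicalSpace X] [MeasurableSpace X] (μ : Measure X) : Set X :=
  {x | ∀ U ∈ nhds x, 0 < μ U}
/-- `r_sep(n,ε;A)`: the maximal cardinality of an `(n,ε)`-separated subset of `A`. -/
noncomputable def rsep {X : Type*} [MetricSpace X] (f : X → X) (n : ℕ) (ε : ℝ) (A : Set X) : ℕ :=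
  sSup {k | ∃ E : Finset X, ↑E ⊆ A ∧ E.card = k ∧
    ∀ x ∈ E, ∀ y ∈ E, x ≠ y → ∃ i < n, ε < dist (f^[i] x) (f^[i] y)}

/-- `h(f;A,ε) = limsup_{n→∞} (1/n) log₂ r_sep(n,ε;A)`. -/
noncomputable def hSep {X : Type*} [MetricSpace X] (f : X → X) (A : Set X) (ε : ℝ) : EReal :=
  limsup (fun n : ℕ => ((Real.logb 2 (rsep f n ε A) / n : ℝ) : EReal)) atTop

/-- Topological entropy of `f` on `K` via separated sets. -/
noncomputable def htopSep {X : Type*} [MetricSpace X] (f : X → X) (K : Set X) : EReal :=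
  ⨆ (ε : ℝ) (_ : 0 < ε), hSep f K ε

section

variable {X M : Type*}

def IsSeparatedFinset [PseudoMetricSpace X] (f : X → X) (n : ℕ) (ε : ℝ) (E : Finset X) : Prop :=
  ∀ x ∈ E, ∀ y ∈ E, x ≠ y → ∃ i < n, ε < dist (f^[i] x) (f^[i] y)

theorem rsep_le_of_forall_card_le [MetricSpace X] {f : X → X} {n : ℕ} {ε : ℝ} {A : Set X}
    {N : ℕ} (h : ∀ E : Finset X, ↑E ⊆ A → IsSeparatedFinset f n ε E → E.card ≤ N) :
    rsep f n ε A ≤ N :=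
  csSup_le ⟨0, ∅, by simp, rfl, by simp⟩ fun _ ⟨E, hEA, hEk, hE⟩ => hEk ▸ h E hEA hE

namespace IsSeparatedFinset

variable [PseudoMetricSpace X] {f g : X → X} {n : ℕ} {ε r : ℝ} {E : Finset X}

theorem injOn_of_forall_dist_lt (hE : IsSeparatedFinset f n ε E) (hr : 2 * r ≤ ε)
    (hg : ∀ x ∈ E, ∀ i < n, dist (f^[i] x) (f^[i] (g x)) < r) : Set.InjOn g E := by
  intro x hx y hy hxy
  by_contra hne
  obtain ⟨i, hi, hsep⟩ := hE x hx y hy hne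
  have hgx := hg x hx i hi
  rw [hxy] at hgx
  linarith [hg y hy i hi, dist_triangle_right (f^[i] x) (f^[i] y) (f^[i] (g y))]

theorem image_of_forall_dist_lt [DecidableEq X] (hE : IsSeparatedFinset f n ε E) {δ : ℝ}
    (hr : δ + 2 * r ≤ ε) (hg : ∀ x ∈ E, ∀ i < n, dist (f^[i] x) (f^[i] (g x)) < r) :
    IsSeparatedFinset f n δ (E.image g) := by
  simp only [IsSeparatedFinset, Finset.forall_mem_image]
  intro x hx y hy hne
  obtain ⟨i, hi, hsep⟩ := hE x hx y hy (ne_of_apply_ne g hne)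
  refine ⟨i, hi, ?_⟩
  have := dist_triangle4 (f^[i] x) (f^[i] (g x)) (f^[i] (g y)) (f^[i] y)
  rw [dist_comm (f^[i] (g y))] at this
  linarith [hg x hx i hi, hg y hy i hi]

end IsSeparatedFinset

theorem inter_nonempty_of_mem_msupp [TopologicalSpace X] [MeasurableSpace X]
    [OpensMeasurableSpace X] {μ : Measure X} [IsProbabilityMeasure μ] {x : X} {U G : Set X}
    (hx : x ∈ msupp μ) (hU : IsOpen U) (hxU : x ∈ U) (hG : μ G = 1) : (U ∩ G).Nonempty := by
  by_contra h
  have hGU : G ⊆ Uᶜ := fun y hyG hyU => h ⟨y, hyU, hyG⟩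
  have hle : 1 ≤ 1 - μ U := calc
    1 = μ G := hG.symm
    _ ≤ μ Uᶜ := measure_mono hGU
    _ = 1 - μ U := prob_compl_eq_one_sub hU.measurableSet
  exact (ENNReal.sub_lt_self ENNReal.one_ne_top one_ne_zero
    (hx U (hU.mem_nhds hxU)).ne').not_ge hle

theorem exists_mem_forall_dist_iterate_lt_of_mem_msupp [PseudoMetricSpace X] [MeasurableSpace X]
    [OpensMeasurableSpace X] {μ : Measure X} [IsProbabilityMeasure μ] {f : X → X}
    (hf : Continuous f) {G : Set X} (hG : μ G = 1) {x : X} (hx : x ∈ msupp μ) (n : ℕ) {r : ℝ}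
    (hr : 0 < r) : ∃ y ∈ G, ∀ i < n, dist (f^[i] x) (f^[i] y) < r := by
  let U := ⋂ i ∈ Finset.range n, f^[i] ⁻¹' Metric.ball (f^[i] x) r
  have hU : IsOpen U := isOpen_biInter_finset fun i _ =>
    (hf.iterate i).isOpen_preimage _ Metric.isOpen_ball
  have hxU : x ∈ U := mem_iInter₂.2 fun i _ => Metric.mem_ball_self hr
  obtain ⟨y, hyU, hyG⟩ := inter_nonempty_of_mem_msupp hx hU hxU hG
  refine ⟨y, hyG, fun i hi => ?_⟩
  have hy := mem_iInter₂.1 hyU i (Finset.mem_range.2 hi)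
  rwa [mem_preimage, Metric.mem_ball, dist_comm] at hy

namespace Policy

variable [MeasurableSpace X] [MeasurableSpace M]

def goodSet [PseudoMetricSpace X] (pol : Policy X M) (f : X → X) (T : ℕ) (δ : ℝ) : Set X :=
  {x | ∀ t, T ≤ t → dist (f^[t] x) (pol.out f t x) ≤ δ}

theorem out_congr (pol : Policy X M) (f : X → X) {t : ℕ} {x y : X}
    (h : ∀ i ≤ t, pol.symb f i x = pol.symb f i y) : pol.out f t x = pol.out f t y :=
  congrArg (pol.est t) (funext fun i => h i (Nat.lt_succ_iff.mp i.isLt))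

theorem card_le_of_isSeparatedFinset [PseudoMetricSpace X] [Fintype M] (pol : Policy X M)
    (f : X → X) {T n : ℕ} {δ : ℝ} {s : Finset (Fin T → X)} (hs : ∀ z, ∃ c ∈ s, dist z c < δ)
    {E : Finset X} (hEG : ↑E ⊆ pol.goodSet f T δ) (hE : IsSeparatedFinset f n (2 * δ) E) :
    E.card ≤ Fintype.card M ^ n * s.card := by
  classical
  choose c hcs hc using hs
  let orbit : X → Fin T → X := fun x j => f^[j] x
  let code : X → (Fin n → M) × (Fin T → X) := fun x => (fun i => pol.symb f i x, c (orbit x))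
  have hclose : ∀ x ∈ E, ∀ y ∈ E, code x = code y → ∀ i < n,
      dist (f^[i] x) (f^[i] y) ≤ 2 * δ := by
    intro x hx y hy hxy i hi
    obtain ⟨hq, hcxy⟩ := Prod.mk.inj hxy
    rcases lt_or_ge i T with hiT | hTi
    · calc dist (f^[i] x) (f^[i] y) ≤ dist (orbit x) (orbit y) :=
            dist_le_pi_dist (orbit x) (orbit y) ⟨i, hiT⟩
        _ ≤ dist (orbit x) (c (orbit x)) + dist (orbit y) (c (orbit y)) := by
            rw [hcxy]; exact dist_triangle_right _ _ _
        _ ≤ 2 * δ := by linarith [hc (orbit x), hc (orbit y)]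
    · have hout : pol.out f i x = pol.out f i y :=
        pol.out_congr f fun j hj => congrFun hq ⟨j, by omega⟩
      calc dist (f^[i] x) (f^[i] y)
          ≤ dist (f^[i] x) (pol.out f i x) + dist (f^[i] y) (pol.out f i y) := by
            rw [hout]; exact dist_triangle_right _ _ _
        _ ≤ 2 * δ := by linarith [hEG hx i hTi, hEG hy i hTi]
  have hinj : Set.InjOn code E := fun x hx y hy hxy => by
    by_contra hne
    obtain ⟨i, hi, hsep⟩ := hE x hx y hy hne
    linarith [hclose x hx y hy hxy i hi]
  calc E.card ≤ (Finset.univ ×ˢ s).card :=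
        Finset.card_le_card_of_injOn code (fun x _ => by simp [code, hcs]) hinj
    _ = Fintype.card M ^ n * s.card := by simp

end Policy

theorem rsep_msupp_le_of_measure_goodSet [MetricSpace X] [MeasurableSpace X]
    [OpensMeasurableSpace X] [MeasurableSpace M] [Fintype M] {μ : Measure X}
    [IsProbabilityMeasure μ] {f : X → X} (hf : Continuous f) (pol : Policy X M) {T : ℕ} {ε : ℝ}
    (hε : 0 < ε) (hG : μ (pol.goodSet f T (ε / 4)) = 1) {s : Finset (Fin T → X)}
    (hs : ∀ z, ∃ c ∈ s, dist z c < ε / 4) (n : ℕ) :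
    rsep f n ε (msupp μ) ≤ Fintype.card M ^ n * s.card := by
  classical
  refine rsep_le_of_forall_card_le fun E hEA hE => ?_
  choose! g hgG hg using fun x (hx : x ∈ E) =>
    exists_mem_forall_dist_iterate_lt_of_mem_msupp hf hG (hEA hx) n (r := ε / 4) (by positivity)
  calc E.card = (E.image g).card :=
        (Finset.card_image_of_injOn (hE.injOn_of_forall_dist_lt (by linarith) hg)).symm
    _ ≤ Fintype.card M ^ n * s.card :=
        pol.card_le_of_isSeparatedFinset f hs
          (by rw [Finset.coe_image]; exact Set.image_subset_iff.2 hgG)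
          (hE.image_of_forall_dist_lt (by linarith) hg)

theorem hSep_le_logb_of_rsep_le [MetricSpace X] {f : X → X} {A : Set X} {ε : ℝ} {K C : ℕ}
    (hK : 0 < K) (hC : 0 < C) (h : ∀ n, rsep f n ε A ≤ K ^ n * C) :
    hSep f A ε ≤ (Real.logb 2 K : EReal) := by
  have hlogK : 0 ≤ Real.logb 2 K := Real.logb_nonneg one_lt_two (by exact_mod_cast hK)
  have hlogC : 0 ≤ Real.logb 2 C := Real.logb_nonneg one_lt_two (by exact_mod_cast hC)
  have hbound : ∀ n : ℕ, 0 < n →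
      Real.logb 2 (rsep f n ε A) / n ≤ Real.logb 2 C / n + Real.logb 2 K := by
    intro n hn
    have hn' : (0 : ℝ) < n := by exact_mod_cast hn
    have hlog : Real.logb 2 (rsep f n ε A) ≤ n * Real.logb 2 K + Real.logb 2 C := by
      rcases (rsep f n ε A).eq_zero_or_pos with h0 | hpos
      · rw [h0, Nat.cast_zero, Real.logb_zero]; positivity
      · calc Real.logb 2 (rsep f n ε A) ≤ Real.logb 2 ((K : ℝ) ^ n * C) :=
              Real.logb_le_logb_of_le one_lt_two (by exact_mod_cast hpos) (by exact_mod_cast h n)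
          _ = n * Real.logb 2 K + Real.logb 2 C := by
              rw [Real.logb_mul (by positivity) (by positivity), Real.logb_pow]
    rw [div_add' _ _ _ hn'.ne', div_le_div_iff_of_pos_right hn']
    linarith
  have hlim : Tendsto (fun n : ℕ => ((Real.logb 2 C / n + Real.logb 2 K : ℝ) : EReal)) atTop
      (nhds (Real.logb 2 K : EReal)) :=
    EReal.tendsto_coe.2 <| by
      simpa using (tendsto_const_div_atTop_nhds_zero_nat (Real.logb 2 C)).add_const (Real.logb 2 K)
  calc hSep f A ε
      ≤ limsup (fun n : ℕ => ((Real.logb 2 C / n + Real.logb 2 K : ℝ) : EReal)) atTop :=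
        limsup_le_limsup ((eventually_gt_atTop 0).mono fun n hn =>
          EReal.coe_le_coe_iff.2 (hbound n hn)) (by isBoundedDefault) (by isBoundedDefault)
    _ = Real.logb 2 K := hlim.limsup_eq

end

theorem stmt0_general {X : Type*} [MetricSpace X] [CompactSpace X] [MeasurableSpace X] [BorelSpace X]
    (f : X ≃ₜ X) (π₀ : Measure X) [IsProbabilityMeasure π₀]
    (M : Type*) [Fintype M] [MeasurableSpace M]
    (hach : ∀ ε : ℝ, 0 < ε → ∃ T : ℕ, ∃ pol : Policy X M,
      π₀ {x₀ | ∀ t, T ≤ t → dist ((⇑f)^[t] x₀) (pol.out (⇑f) t x₀) ≤ ε} = 1) :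
    htopSep (⇑f) (msupp π₀) ≤ ((Real.logb 2 (Fintype.card M) : ℝ) : EReal) := by
  obtain ⟨x⟩ := nonempty_of_isProbabilityMeasure π₀
  refine iSup₂_le fun ε hε => ?_
  obtain ⟨T, pol, hG⟩ := hach (ε / 4) (by positivity)
  obtain ⟨s, -, hs⟩ := (isCompact_univ (X := Fin T → X)).elim_nhds_subcover
    (fun z => Metric.ball z (ε / 4)) fun z _ => Metric.ball_mem_nhds z (by positivity)
  have hnet : ∀ z, ∃ c ∈ s, dist z c < ε / 4 := fun z => by simpa using hs (mem_univ z)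
  obtain ⟨c, hcs, -⟩ := hnet fun _ => x
  exact hSep_le_logb_of_rsep_le (Fintype.card_pos_iff.2 ⟨pol.symb f 0 x⟩)
    (Finset.card_pos.2 ⟨c, hcs⟩) (rsep_msupp_le_of_measure_goodSet f.continuous pol hε hG hnet)

/-- If `π₀` is `f`-invariant and for every `ε > 0` the eventual almost
sure estimation objective (E1) can be achieved over the finite alphabet `M` by some
zero-delay coding and estimation policy, then `log₂|M| ≥ h_top(f; supp π₀)`
(in particular the topological entropy of `f` on the support of `π₀` is finite). -/
theorem stmt0 {X : Type*} [MetricSpace X] [CompactSpace X] [MeasurableSpace X] [BorelSpace X]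
    (f : X ≃ₜ X) (π₀ : Measure X) [IsProbabilityMeasure π₀]
    (hinv : MeasurePreserving (⇑f) π₀ π₀)
    (M : Type*) [Fintype M] [MeasurableSpace M]
    (hach : ∀ ε : ℝ, 0 < ε → ∃ T : ℕ, ∃ pol : Policy X M,
      π₀ {x₀ | ∀ t, T ≤ t → dist ((⇑f)^[t] x₀) (pol.out (⇑f) t x₀) ≤ ε} = 1) :
    htopSep (⇑f) (msupp π₀) ≤ ((Real.logb 2 (Fintype.card M) : ℝ) : EReal) :=
  stmt0_general f π₀ M hach
end

section
/- Fix a zero-delay coding and estimation policy over the finite alphabet M, and let ε > 0, T ∈ ℕ, n ∈ ℕ. Let X̃ ⊆ X be any set such that d(f^t(x₀), x̂_t(x₀)) ≤ ε for every x₀ ∈ X̃ and every t with T ≤ t ≤ T+n−1. Then every subset E ⊆ X̃ with the property that for any two distinct x, y ∈ E there exists t ∈ {T, T+1, …, T+n−1} with d(f^t(x), f^t(y)) > 2ε satisfies |E| ≤ |M|^{T+n}. -/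
open MeasureTheory Filter Set

/-- Fix a zero-delay coding and estimation policy over the finite
alphabet `M`, let `ε > 0`, `T, n ∈ ℕ`, and let `X̃ ⊆ X` be a set on which the estimates
are `ε`-accurate at all times `T ≤ t < T + n`. Then any `E ⊆ X̃` such that any two
distinct points of `E` are `(2ε)`-separated at some time `t ∈ {T, …, T+n-1}` is finite
with `|E| ≤ |M|^{T+n}`. -/
theorem stmt10 {X : Type*} [MetricSpace X] [CompactSpace X] [MeasurableSpace X] [BorelSpace X]
    (f : X ≃ₜ X) (M : Type*) [Fintype M] [MeasurableSpace M] (pol : Policy X M)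
    (ε : ℝ) (hε : 0 < ε) (T n : ℕ) (Xt : Set X)
    (hXt : ∀ x₀ ∈ Xt, ∀ t, T ≤ t → t < T + n → dist ((⇑f)^[t] x₀) (pol.out (⇑f) t x₀) ≤ ε)
    (E : Set X) (hE : E ⊆ Xt)
    (hsep : ∀ x ∈ E, ∀ y ∈ E, x ≠ y →
      ∃ t, T ≤ t ∧ t < T + n ∧ 2 * ε < dist ((⇑f)^[t] x) ((⇑f)^[t] y)) :
    E.Finite ∧ Nat.card E ≤ Fintype.card M ^ (T + n) := by
  classical
  set g : X → (Fin (T + n) → M) := fun x i => pol.symb (⇑f) (i : ℕ) x with hg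
  have hinj : Set.InjOn g E := by
    intro x hx y hy hxy
    by_contra hne
    obtain ⟨t, hT, htn, hd⟩ := hsep x hx y hy hne
    have hout : pol.out (⇑f) t x = pol.out (⇑f) t y := by
      unfold Policy.out
      congr 1
      funext i
      have : (i : ℕ) < T + n := lt_of_le_of_lt (Nat.lt_succ_iff.mp i.isLt) htn
      have := congrFun hxy ⟨(i : ℕ), this⟩
      simpa [hg] using this
    have h1 := hXt x (hE hx) t hT htn
    have h2 := hXt y (hE hy) t hT htn
    rw [hout] at h1
    linarith [dist_triangle ((⇑f)^[t] x) (pol.out (⇑f) t y) ((⇑f)^[t] y),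
      dist_comm ((⇑f)^[t] y) (pol.out (⇑f) t y)]
  have hfin : E.Finite := Set.Finite.of_finite_image (Set.toFinite _) hinj
  refine ⟨hfin, ?_⟩
  have : Nat.card E ≤ Nat.card (Fin (T + n) → M) := by
    have : Function.Injective (fun x : E => g x) := fun a b h => Subtype.ext (hinj a.2 b.2 h)
    exact Nat.card_le_card_of_injective _ this
  simpa using this
end

section
/- Assume π₀ is f-invariant, and suppose that for some ε > 0 a zero-delay coding and estimation policy over the finite alphabet M satisfies π₀({x₀ ∈ X : limsup_{t→∞} d(f^t(x₀), x̂_t(x₀)) ≤ ε}) = 1. Then for every δ > ε and every α ∈ (0,1) there exist K ∈ ℕ and a set X̃ ⊆ X with π₀(X̃) ≥ 1 − α such that limsup_{n→∞} (1/n) log r_sep(n, 2δ; X̃) ≤ log|M|. -/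
open MeasureTheory Filter Set

/-- In a compact metric space, `(K, 2r)`-separated sets have uniformly bounded cardinality. -/
lemma sepBound {X : Type*} [MetricSpace X] [CompactSpace X]
    (g : X → X) (K : ℕ) (r : ℝ) (hr : 0 < r) :
    ∃ C : ℕ, 1 ≤ C ∧ ∀ E : Finset X,
      (∀ x ∈ E, ∀ y ∈ E, x ≠ y → ∃ i < K, 2 * r < dist (g^[i] x) (g^[i] y)) →
      E.card ≤ C := by
  classical
  obtain ⟨t, -, htfin, htcov⟩ :=
    (isCompact_univ (X := Fin K → X)).finite_cover_balls (e := r) hr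
  set Φ : X → (Fin K → X) := fun x i => g^[(i : ℕ)] x with hΦ
  have hcov : ∀ x : X, ∃ p ∈ t, Φ x ∈ Metric.ball p r := by
    intro x
    have := htcov (Set.mem_univ (Φ x))
    simpa using this
  choose p hp hball using hcov
  refine ⟨htfin.toFinset.card + 1, Nat.succ_le_succ (Nat.zero_le _), ?_⟩
  intro E hE
  have hle : E.card ≤ htfin.toFinset.card := by
    apply Finset.card_le_card_of_injOn p
    · intro x _
      simpa [Set.Finite.mem_toFinset] using hp x
    · intro x hx y hy hpxy
      by_contra hne
      obtain ⟨i, hiK, hdist⟩ := hE x (by simpa using hx) y (by simpa using hy) hne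
      have h1 : dist (Φ x) (Φ y) ≤ dist (Φ x) (p x) + dist (p x) (Φ y) := dist_triangle _ _ _
      have h2 : dist (Φ x) (p x) < r := by simpa [Metric.mem_ball] using hball x
      have h3 : dist (p x) (Φ y) < r := by
        rw [hpxy, dist_comm]
        simpa [Metric.mem_ball] using hball y
      have h4 : dist (g^[i] x) (g^[i] y) ≤ dist (Φ x) (Φ y) :=
        dist_le_pi_dist (Φ x) (Φ y) ⟨i, hiK⟩
      linarith
  omega

/-- Assume `π₀` is `f`-invariant and a zero-delay policy over the
finite alphabet `M` achieves `π₀({x₀ : limsup_t d(f^t(x₀), x̂_t(x₀)) ≤ ε}) = 1` for some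
`ε > 0`. Then for every `δ > ε` and every `α ∈ (0,1)` there are `K ∈ ℕ` and a set
`X̃ ⊆ X` with `π₀(X̃) ≥ 1 - α` such that
`limsup_{n→∞} (1/n) log₂ r_sep(n, 2δ; X̃) ≤ log₂|M|`. -/
theorem stmt12 {X : Type*} [MetricSpace X] [CompactSpace X] [MeasurableSpace X] [BorelSpace X]
    (f : X ≃ₜ X) (π₀ : Measure X) [IsProbabilityMeasure π₀]
    (hinv : MeasurePreserving (⇑f) π₀ π₀)
    (M : Type*) [Fintype M] [MeasurableSpace M]
    (ε : ℝ) (hε : 0 < ε) (pol : Policy X M)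
    (hach : π₀ {x₀ | limsup (fun t : ℕ => dist ((⇑f)^[t] x₀) (pol.out (⇑f) t x₀)) atTop ≤ ε}
      = 1) :
    ∀ δ : ℝ, ε < δ → ∀ α ∈ Set.Ioo (0 : ℝ) 1, ∃ K : ℕ, ∃ Xt : Set X,
      ENNReal.ofReal (1 - α) ≤ π₀ Xt ∧
      hSep (⇑f) Xt (2 * δ) ≤ ((Real.logb 2 (Fintype.card M) : ℝ) : EReal) := by
  classical
  intro δ hδ α hα
  have hδ0 : 0 < δ := hε.trans hδ
  -- X is nonempty
  have hXne : Nonempty X := by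
    by_contra h
    rw [not_nonempty_iff] at h
    have h1 : π₀ Set.univ = 1 := measure_univ
    rw [Set.univ_eq_empty_iff.mpr h, measure_empty] at h1
    exact zero_ne_one h1
  have hMne : Nonempty M := ⟨pol.coder 0 fun _ => Classical.arbitrary X⟩
  set m : ℕ := Fintype.card M with hm
  have hm1 : 1 ≤ m := Fintype.card_pos
  -- the good sets S K
  set S : ℕ → Set X :=
    fun K => {x | ∀ t, K ≤ t → dist ((⇑f)^[t] x) (pol.out (⇑f) t x) ≤ δ} with hS
  have hmon : Monotone S := by
    intro K K' hKK' x hx t ht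
    exact hx t (hKK'.trans ht)
  have hG : {x₀ | limsup (fun t : ℕ => dist ((⇑f)^[t] x₀) (pol.out (⇑f) t x₀)) atTop ≤ ε}
      ⊆ ⋃ K, S K := by
    intro x hx
    have hbdd : IsBoundedUnder (· ≤ ·) atTop
        (fun t : ℕ => dist ((⇑f)^[t] x) (pol.out (⇑f) t x)) :=
      isBoundedUnder_of ⟨Metric.diam (Set.univ : Set X), fun t =>
        Metric.dist_le_diam_of_mem isCompact_univ.isBounded (Set.mem_univ _) (Set.mem_univ _)⟩
    have hlt : limsup (fun t : ℕ => dist ((⇑f)^[t] x) (pol.out (⇑f) t x)) atTop < δ :=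
      lt_of_le_of_lt hx hδ
    have hev := eventually_lt_of_limsup_lt hlt hbdd
    obtain ⟨a, ha⟩ := hev.exists_forall_of_atTop
    exact Set.mem_iUnion.mpr ⟨a, fun t ht => (ha t ht).le⟩
  have hUnion : π₀ (⋃ K, S K) = 1 := by
    refine le_antisymm prob_le_one ?_
    calc (1 : ENNReal) = π₀ _ := hach.symm
      _ ≤ π₀ (⋃ K, S K) := measure_mono hG
  have hsup : (⨆ K, π₀ (S K)) = 1 := by
    rw [← hmon.measure_iUnion, hUnion]
  have hlt1 : ENNReal.ofReal (1 - α) < 1 := ENNReal.ofReal_lt_one.mpr (by linarith [hα.1])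
  obtain ⟨K, hK⟩ : ∃ K, ENNReal.ofReal (1 - α) < π₀ (S K) := by
    rw [show (1 : ENNReal) = ⨆ K, π₀ (S K) from hsup.symm] at hlt1
    exact lt_iSup_iff.mp hlt1
  obtain ⟨C, hC1, hCbd⟩ := sepBound (⇑f) K δ hδ0
  -- counting bound
  have hcount : ∀ n : ℕ, rsep (⇑f) n (2 * δ) (S K) ≤ C * m ^ n := by
    intro n
    refine csSup_le ⟨0, ∅, by simp, by simp, by simp⟩ ?_
    rintro k ⟨E, hEsub, hk, hEsep⟩
    subst hk
    set σ : X → (Fin n → M) := fun x i => pol.symb (⇑f) (i : ℕ) x with hσ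
    have hfiber : ∀ b ∈ E.image σ, (E.filter fun x => σ x = b).card ≤ C := by
      intro b _
      apply hCbd
      intro x hx y hy hne
      rw [Finset.mem_filter] at hx hy
      obtain ⟨i, hin, hdist⟩ := hEsep x hx.1 y hy.1 hne
      by_cases hiK : i < K
      · exact ⟨i, hiK, hdist⟩
      · exfalso
        push_neg at hiK
        have hσxy : σ x = σ y := hx.2.trans hy.2.symm
        have hout : pol.out (⇑f) i x = pol.out (⇑f) i y := by
          unfold Policy.out
          congr 1
          funext j
          have hj : (j : ℕ) < n := by
            have := j.isLt
            omega
          exact congrFun hσxy ⟨(j : ℕ), hj⟩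
        have hx' : dist ((⇑f)^[i] x) (pol.out (⇑f) i x) ≤ δ := hEsub hx.1 i hiK
        have hy' : dist ((⇑f)^[i] y) (pol.out (⇑f) i y) ≤ δ := hEsub hy.1 i hiK
        have htri : dist ((⇑f)^[i] x) ((⇑f)^[i] y) ≤
            dist ((⇑f)^[i] x) (pol.out (⇑f) i y) + dist (pol.out (⇑f) i y) ((⇑f)^[i] y) :=
          dist_triangle _ _ _
        have hx2 : dist ((⇑f)^[i] x) (pol.out (⇑f) i y) ≤ δ := hout ▸ hx'
        have hy2 : dist (pol.out (⇑f) i y) ((⇑f)^[i] y) ≤ δ := by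
          rw [dist_comm]; exact hy'
        linarith
    calc E.card ≤ C * (E.image σ).card := Finset.card_le_mul_card_image E C hfiber
      _ ≤ C * Fintype.card (Fin n → M) :=
          Nat.mul_le_mul_left C (Finset.card_le_univ _)
      _ = C * m ^ n := by rw [Fintype.card_fun, Fintype.card_fin]
  -- real-analysis bound
  have hC1' : (1 : ℝ) ≤ (C : ℝ) := by exact_mod_cast hC1
  have hm1' : (1 : ℝ) ≤ (m : ℝ) := by exact_mod_cast hm1
  have key : ∀ n : ℕ, 1 ≤ n →
      Real.logb 2 (rsep (⇑f) n (2 * δ) (S K)) / n ≤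
        Real.logb 2 C / n + Real.logb 2 m := by
    intro n hn
    have hn0 : (0 : ℝ) < (n : ℝ) := by exact_mod_cast hn
    have hbd : (rsep (⇑f) n (2 * δ) (S K) : ℝ) ≤ (C : ℝ) * (m : ℝ) ^ n := by
      exact_mod_cast hcount n
    have hCm1 : (1 : ℝ) ≤ (C : ℝ) * (m : ℝ) ^ n := by
      calc (1 : ℝ) = 1 * 1 := by ring
        _ ≤ (C : ℝ) * (m : ℝ) ^ n := by
            apply mul_le_mul hC1' (one_le_pow₀ hm1') zero_le_one (by linarith)
    have hlog : Real.logb 2 (rsep (⇑f) n (2 * δ) (S K)) ≤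
        Real.logb 2 ((C : ℝ) * (m : ℝ) ^ n) := by
      rcases Nat.eq_zero_or_pos (rsep (⇑f) n (2 * δ) (S K)) with h0 | hpos'
      · rw [h0]
        simpa using Real.logb_nonneg one_lt_two hCm1
      · exact Real.logb_le_logb_of_le one_lt_two (by exact_mod_cast hpos') hbd
    have hsplit : Real.logb 2 ((C : ℝ) * (m : ℝ) ^ n) =
        Real.logb 2 C + n * Real.logb 2 m := by
      rw [Real.logb_mul (by linarith) (by positivity), Real.logb_pow]
    rw [hsplit] at hlog
    calc Real.logb 2 (rsep (⇑f) n (2 * δ) (S K)) / n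
        ≤ (Real.logb 2 C + n * Real.logb 2 m) / n := by
          gcongr
      _ = Real.logb 2 C / n + Real.logb 2 m := by
          rw [add_div, mul_div_cancel_left₀ _ (ne_of_gt hn0)]
  -- limsup bound
  refine ⟨K, S K, hK.le, ?_⟩
  have hv : Tendsto (fun n : ℕ => Real.logb 2 C / n + Real.logb 2 m) atTop
      (nhds (0 + Real.logb 2 m)) :=
    (tendsto_const_div_atTop_nhds_zero_nat _).add tendsto_const_nhds
  rw [zero_add] at hv
  have hvE : Tendsto (fun n : ℕ => ((Real.logb 2 C / n + Real.logb 2 m : ℝ) : EReal)) atTop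
      (nhds ((Real.logb 2 (m : ℝ) : ℝ) : EReal)) :=
    (continuous_coe_real_ereal.tendsto _).comp hv
  have hlimv : limsup (fun n : ℕ => ((Real.logb 2 C / n + Real.logb 2 m : ℝ) : EReal)) atTop
      = ((Real.logb 2 (m : ℝ) : ℝ) : EReal) := hvE.limsup_eq
  have hle : (fun n : ℕ => ((Real.logb 2 (rsep (⇑f) n (2 * δ) (S K)) / n : ℝ) : EReal)) ≤ᶠ[atTop]
      fun n : ℕ => ((Real.logb 2 C / n + Real.logb 2 m : ℝ) : EReal) := by
    filter_upwards [eventually_ge_atTop 1] with n hn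
    exact EReal.coe_le_coe_iff.mpr (key n hn)
  have hfin : hSep (⇑f) (S K) (2 * δ) ≤
      limsup (fun n : ℕ => ((Real.logb 2 C / n + Real.logb 2 m : ℝ) : EReal)) atTop :=
    limsup_le_limsup hle
  rw [hlimv] at hfin
  exact hfin
end
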